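/- For an oriented piecewise-geodesic closed curve Γ on the unit sphere built from geodesic triangles with common apex x₁: if the i-th geodesic triangle over edge i of Γ has base angles βᵢ, γᵢ at the two endpoints of edge i, orientation sign δᵢ ∈ {±1}, and X is the 'gradient of height' vector field with source x₀ = −x₁ and sink x₁, then 2π·ind(Γ, X) − ∫_Γ k_g ds − Σᵢ θᵢ = Σᵢ δᵢ(βᵢ + γᵢ − π), where θᵢ are the exterior turning angles of Γ at its vertices and k_g is the geodesic curvature along the (geodesic) edges, which vanishes. -/

import Mathlib

open MeasureTheory Real Set
open scoped Classical

noncomputable section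

/-- ℝ³ as a Euclidean space. -/
abbrev E3 := EuclideanSpace ℝ (Fin 3)

/-- Dot product in ℝ³. -/
def dot3 (u v : E3) : ℝ := inner ℝ u v

/-- Cross product in ℝ³. -/
def cross3 (u v : E3) : E3 :=
  (EuclideanSpace.equiv (Fin 3) ℝ).symm
    ![u 1 * v 2 - u 2 * v 1, u 2 * v 0 - u 0 * v 2, u 0 * v 1 - u 1 * v 0]

/-- Two-argument arctangent, `atan2 y x = arg (x + i y) ∈ (-π, π]`. -/
def atan2 (y x : ℝ) : ℝ := Complex.arg ⟨x, y⟩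

/-- Signed area of the spherical triangle with vertices `u v w` (Van Oosterom–Strackee). -/
def signedArea (u v w : E3) : ℝ :=
  2 * atan2 (dot3 u (cross3 v w)) (1 + dot3 u v + dot3 u w + dot3 v w)

/-- The unit sphere S² ⊂ ℝ³. -/
def unitSphere : Set E3 := Metric.sphere 0 1

/-- Orthogonal projection of `v` onto the tangent plane of the unit sphere at `u`. -/
def tproj (u v : E3) : E3 := v - (dot3 u v) • u

/-- Normalization of a vector. -/
def nz (v : E3) : E3 := ‖v‖⁻¹ • v

/-- Interior angle at `u` of the spherical triangle `u v w`. -/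
def sphAngle (u v w : E3) : ℝ :=
  Real.arccos (dot3 (tproj u v) (tproj u w) / (‖tproj u v‖ * ‖tproj u w‖))

/-- The (closed) minor geodesic arc from `a` to `b` on the unit sphere. -/
def geoArc (a b : E3) : Set E3 :=
  {v | ∃ s t : ℝ, 0 ≤ s ∧ 0 ≤ t ∧ s • a + t • b ≠ 0 ∧ v = nz (s • a + t • b)}

/-- The (closed) spherical triangle with vertices `a b c`. -/
def sphTriangle (a b c : E3) : Set E3 :=
  {v | ∃ r s t : ℝ, 0 ≤ r ∧ 0 ≤ s ∧ 0 ≤ t ∧ r • a + s • b + t • c ≠ 0 ∧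
      v = nz (r • a + s • b + t • c)}

/-- The open spherical triangle region determined by the orientation of `a b c`. -/
def insideTri (a b c : E3) : Set E3 :=
  {v : E3 | ‖v‖ = 1 ∧
    ((0 < dot3 v (cross3 a b) ∧ 0 < dot3 v (cross3 b c) ∧ 0 < dot3 v (cross3 c a)) ∨
     (dot3 v (cross3 a b) < 0 ∧ dot3 v (cross3 b c) < 0 ∧ dot3 v (cross3 c a) < 0))}

/-- Area of a subset of ℝ³, via the 2-dimensional Hausdorff measure. -/
def area (Ω : Set E3) : ℝ := (μH[2] Ω).toReal

/-- Radial projection onto the unit sphere centered at `p`. -/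
def projSph (p x : E3) : E3 := nz (x - p)

/-- Boundary of a region inside the unit sphere (frontier relative to the sphere). -/
def sphFrontier (Ω : Set E3) : Set E3 := closure Ω ∩ closure (unitSphere \ Ω)

/-- Geodesic curvature of a unit-speed curve on the unit sphere. -/
def geodCurv (γ : ℝ → E3) (t : ℝ) : ℝ :=
  dot3 (γ t) (cross3 (deriv γ t) (deriv (deriv γ) t))

/-- Unit-speed–independent angle function of a curve's tangent relative to a tangent
vector field `X` on the sphere:  `θ t` is a continuous determination of the angle from
`X (c t)` to `deriv c t` in the oriented tangent plane at `c t`. -/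
def IsAngleFor (X : E3 → E3) (c : ℝ → E3) (θ : ℝ → ℝ) : Prop :=
  Continuous θ ∧ ∀ t,
    ‖X (c t)‖ * ‖deriv c t‖ * Real.cos (θ t) = dot3 (X (c t)) (deriv c t) ∧
    ‖X (c t)‖ * ‖deriv c t‖ * Real.sin (θ t) = dot3 (c t) (cross3 (X (c t)) (deriv c t))

/-- The geodesic circle of radius `r` around `z` on the unit sphere, with respect to
an (oriented) orthonormal tangent frame `e1, e2` at `z`. -/
def circleCurve (z e1 e2 : E3) (r t : ℝ) : E3 :=
  Real.cos r • z + Real.sin r • (Real.cos (2 * π * t) • e1 + Real.sin (2 * π * t) • e2)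

/-- `X` has an isolated singularity of index 1 at `z`: the tangent of every small
positively-oriented geodesic circle around `z` makes zero net turns relative to `X`. -/
def IndexOne (X : E3 → E3) (z : E3) : Prop :=
  ∃ e1 e2 : E3, ‖e1‖ = 1 ∧ ‖e2‖ = 1 ∧ dot3 e1 e2 = 0 ∧ dot3 z e1 = 0 ∧ dot3 z e2 = 0 ∧
    cross3 e1 e2 = z ∧
    ∃ r₀ > 0, ∀ r ∈ Ioo (0 : ℝ) r₀, ∀ θ : ℝ → ℝ,
      IsAngleFor X (circleCurve z e1 e2 r) θ → θ 1 - θ 0 = 0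

/-- The Alexander numbering rule for an integer-valued function `f` relative to the
oriented curve `γ` on the unit sphere: at every smooth point of `γ`, the value
immediately to the left exceeds the value immediately to the right by one. -/
def AlexanderRule (γ : ℝ → E3) (f : E3 → ℤ) : Prop :=
  ∀ t : ℝ, DifferentiableAt ℝ γ t → deriv γ t ≠ 0 →
    ∃ ε₀ > 0, ∀ ε ∈ Ioo 0 ε₀,
      f (nz (γ t + ε • cross3 (γ t) (deriv γ t))) =
        f (nz (γ t - ε • cross3 (γ t) (deriv γ t))) + 1

/-- The multiset of directed edges of a triangle mesh. -/
def dirEdges (m : ℕ) (tri : Fin m → Fin 3 → E3) : Multiset (E3 × E3) :=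
  (Finset.univ : Finset (Fin m)).val.bind fun i =>
    {(tri i 0, tri i 1), (tri i 1, tri i 2), (tri i 2, tri i 0)}

/-- The multiset of boundary edges of a triangle mesh (directed edges whose reversal
does not occur in the mesh). -/
def bdryEdges (m : ℕ) (tri : Fin m → Fin 3 → E3) : Multiset (E3 × E3) :=
  (dirEdges m tri).filter fun e => (dirEdges m tri).count e.swap = 0

/-- `q` lies in the open triangle `A B C`. -/
def openTriPt (A B C q : E3) : Prop :=
  ∃ a b c : ℝ, 0 < a ∧ 0 < b ∧ 0 < c ∧ a + b + c = 1 ∧ q = a • A + b • B + c • C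

/-- `q` lies in the closed triangle `A B C`. -/
def closedTriPt (A B C q : E3) : Prop :=
  ∃ a b c : ℝ, 0 ≤ a ∧ 0 ≤ b ∧ 0 ≤ c ∧ a + b + c = 1 ∧ q = a • A + b • B + c • C

/-- `q` lies on the closed segment `[A, B]`. -/
def onSeg (A B q : E3) : Prop :=
  ∃ a b : ℝ, 0 ≤ a ∧ 0 ≤ b ∧ a + b = 1 ∧ q = a • A + b • B

/-- (Unnormalized) normal of the triangle `A B C`. -/
def triNormal (A B C : E3) : E3 := cross3 (B - A) (C - A)

/-- The open ray from `p` in direction `d` meets the open triangle `A B C`. -/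
def rayHits (p d A B C : E3) : Prop := ∃ t : ℝ, 0 < t ∧ openTriPt A B C (p + t • d)

/-- Signed number of intersections of the ray from `p` in direction `d` with the mesh. -/
def chiMesh (m : ℕ) (tri : Fin m → Fin 3 → E3) (p d : E3) : ℤ :=
  ∑ i : Fin m,
    if rayHits p d (tri i 0) (tri i 1) (tri i 2) then
      (if 0 < dot3 d (triNormal (tri i 0) (tri i 1) (tri i 2)) then 1 else -1)
    else 0

/-- The ray from `p` in direction `d` is generic for the mesh: it meets no edges and
meets triangle interiors transversally. -/
def GenericRay (m : ℕ) (tri : Fin m → Fin 3 → E3) (p d : E3) : Prop :=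
  d ≠ 0 ∧
  (∀ i : Fin m, ∀ t : ℝ, 0 < t →
    ¬ onSeg (tri i 0) (tri i 1) (p + t • d) ∧
    ¬ onSeg (tri i 1) (tri i 2) (p + t • d) ∧
    ¬ onSeg (tri i 2) (tri i 0) (p + t • d)) ∧
  (∀ i : Fin m, rayHits p d (tri i 0) (tri i 1) (tri i 2) →
    dot3 d (triNormal (tri i 0) (tri i 1) (tri i 2)) ≠ 0)

/-- Sum over mesh triangles of signed areas of their radial projections to `S²_p`. -/
def meshWNsum (m : ℕ) (tri : Fin m → Fin 3 → E3) (p : E3) : ℝ :=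
  ∑ i : Fin m,
    signedArea (projSph p (tri i 0)) (projSph p (tri i 1)) (projSph p (tri i 2))

/-- The generalized winding number of a triangle mesh at `p`. -/
def meshWN (m : ℕ) (tri : Fin m → Fin 3 → E3) (p : E3) : ℝ :=
  (1 / (4 * π)) * meshWNsum m tri p

/-- Spherical linear interpolation: unit-speed-reparametrized minor great-circle arc
from `a` to `b` over the parameter interval `[0,1]`. -/
def slerp (a b : E3) (s : ℝ) : E3 :=
  (Real.sin ((1 - s) * Real.arccos (dot3 a b)) / Real.sin (Real.arccos (dot3 a b))) • a +
  (Real.sin (s * Real.arccos (dot3 a b)) / Real.sin (Real.arccos (dot3 a b))) • b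

/-- Stereographic projection from `x₀` onto the plane tangent to the sphere at `-x₀`. -/
def stereo (x₀ q : E3) : E3 := x₀ + (2 / (1 - dot3 x₀ q)) • (q - x₀)

/-- Stereographic projection in coordinates, using a tangent frame `e1, e2` at `-x₀`. -/
def stereo2 (x₀ e1 e2 q : E3) : ℝ × ℝ :=
  (dot3 (stereo x₀ q - (-x₀)) e1, dot3 (stereo x₀ q - (-x₀)) e2)

/-- Dot product in ℝ². -/
def dot2 (a b : ℝ × ℝ) : ℝ := a.1 * b.1 + a.2 * b.2

/-- Determinant of two vectors in ℝ². -/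
def det2 (a b : ℝ × ℝ) : ℝ := a.1 * b.2 - a.2 * b.1

/-- Normal vector of a parametrized surface `φ` at parameter `x`. -/
def surfNormal (φ : ℝ × ℝ → E3) (x : ℝ × ℝ) : E3 :=
  cross3 (fderiv ℝ φ x (1, 0)) (fderiv ℝ φ x (0, 1))

open Real Set

lemma cos_int_pi_sq (n : ℤ) : Real.cos ((n:ℝ)*π) ^ 2 = 1 := by
  have h := Real.sin_sq_add_cos_sq ((n:ℝ)*π)
  rw [Real.sin_int_mul_pi] at h; linarith

lemma my_arccos_cos (x : ℝ) (k : ℤ) (h1 : (2*(k:ℝ)+1)*π < x) (h2 : x < (2*(k:ℝ)+2)*π) :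
    Real.arccos (Real.cos x) = (2*(k:ℝ)+2)*π - x := by
  have hc : Real.cos ((((k:ℝ)+1))*(2*π) - x) = Real.cos x := by
    have h := Real.cos_int_mul_two_pi_sub x (k+1)
    have e : (((k+1:ℤ)):ℝ) = (k:ℝ)+1 := by push_cast; ring
    rw [e] at h; exact h
  have h0 : 0 ≤ ((k:ℝ)+1)*(2*π) - x := by nlinarith [Real.pi_pos]
  have hπ : ((k:ℝ)+1)*(2*π) - x ≤ π := by nlinarith [Real.pi_pos]
  rw [← hc, Real.arccos_cos h0 hπ]; ring

lemma theta_const (θ : ℝ → ℝ) (hc : Continuous θ)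
    (h : ∀ t ∈ Icc (0:ℝ) 1, Real.sin (θ t) = 0) : θ 1 = θ 0 := by
  by_contra hne
  have key : ∀ n : ℤ, ¬ ∃ s ∈ Icc (0:ℝ) 1, θ s = (n:ℝ)*π + π/2 := by
    rintro n ⟨s, hs, hθs⟩
    have hz := h s hs
    rw [hθs, Real.sin_add, Real.sin_int_mul_pi, Real.cos_pi_div_two, Real.sin_pi_div_two] at hz
    have := cos_int_pi_sq n
    nlinarith
  obtain ⟨n, hn⟩ := Real.sin_eq_zero_iff.1 (h 0 ⟨le_refl _, zero_le_one⟩)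
  obtain ⟨m, hm⟩ := Real.sin_eq_zero_iff.1 (h 1 ⟨zero_le_one, le_refl _⟩)
  rcases lt_trichotomy (θ 0) (θ 1) with hlt | heq | hgt
  · have hnm : (n:ℝ)*π < (m:ℝ)*π := by rw [hn, hm]; exact hlt
    have hlt' : (n:ℝ) < m := (mul_lt_mul_iff_left₀ Real.pi_pos).1 hnm
    have hn1m : (n:ℝ) + 1 ≤ m := by exact_mod_cast Int.add_one_le_iff.2 (by exact_mod_cast hlt')
    have hmem : (n:ℝ)*π + π/2 ∈ Icc (θ 0) (θ 1) := by
      constructor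
      · rw [← hn]; linarith [Real.pi_pos]
      · rw [← hm]; nlinarith [Real.pi_pos]
    obtain ⟨s, hs, hθs⟩ := intermediate_value_Icc zero_le_one hc.continuousOn hmem
    exact key n ⟨s, hs, hθs⟩
  · exact hne heq.symm
  · have hnm : (m:ℝ)*π < (n:ℝ)*π := by rw [hn, hm]; exact hgt
    have hlt' : (m:ℝ) < n := (mul_lt_mul_iff_left₀ Real.pi_pos).1 hnm
    have hn1m : (m:ℝ) + 1 ≤ n := by exact_mod_cast Int.add_one_le_iff.2 (by exact_mod_cast hlt')
    have hmem : (m:ℝ)*π + π/2 ∈ Icc (θ 1) (θ 0) := by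
      constructor
      · rw [← hm]; linarith [Real.pi_pos]
      · rw [← hn]; nlinarith [Real.pi_pos]
    obtain ⟨s, hs, hθs⟩ := intermediate_value_Icc' zero_le_one hc.continuousOn hmem
    exact key m ⟨s, hs, hθs⟩

lemma branch_neg (θ : ℝ → ℝ) (hc : Continuous θ)
    (h : ∀ t ∈ Icc (0:ℝ) 1, Real.sin (θ t) < 0) :
    Real.arccos (Real.cos (θ 0)) - Real.arccos (Real.cos (θ 1)) = θ 1 - θ 0 := by
  obtain ⟨n, hn1, hn2⟩ : ∃ n : ℤ, (n:ℝ)*π < θ 0 ∧ θ 0 < ((n:ℝ)+1)*π := by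
    refine ⟨⌊θ 0 / π⌋, ?_, ?_⟩
    · have hle : (⌊θ 0 / π⌋ : ℝ) * π ≤ θ 0 := by
        have := Int.floor_le (θ 0 / π)
        calc (⌊θ 0 / π⌋ : ℝ) * π ≤ (θ 0 / π) * π := by
              apply mul_le_mul_of_nonneg_right this (le_of_lt Real.pi_pos)
          _ = θ 0 := by field_simp
      rcases eq_or_lt_of_le hle with he | hl
      · exfalso
        have hz : Real.sin (θ 0) = 0 := by rw [← he]; exact Real.sin_int_mul_pi _
        linarith [h 0 ⟨le_refl _, zero_le_one⟩]
      · exact hl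
    · have h1 := Int.lt_floor_add_one (θ 0 / π)
      have h2 : θ 0 < ((⌊θ 0 / π⌋:ℝ) + 1) * π := by
        calc θ 0 = (θ 0 / π) * π := by field_simp
          _ < ((⌊θ 0 / π⌋:ℝ) + 1) * π := by
              apply mul_lt_mul_of_pos_right _ Real.pi_pos
              exact_mod_cast h1
      exact h2
  have hzero1 : Real.sin (((n:ℝ)+1)*π) = 0 := by
    have h := Real.sin_int_mul_pi (n+1)
    have e : (((n+1:ℤ)):ℝ) = (n:ℝ)+1 := by push_cast; ring
    rw [e] at h; exact h
  have key : ∀ t ∈ Icc (0:ℝ) 1, (n:ℝ)*π < θ t ∧ θ t < ((n:ℝ)+1)*π := by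
    intro t ht
    constructor
    · by_contra hle
      push_neg at hle
      have hmem : (n:ℝ)*π ∈ Icc (θ t) (θ 0) := ⟨hle, le_of_lt hn1⟩
      obtain ⟨s, hs, hθs⟩ := intermediate_value_Icc' ht.1 (hc.continuousOn) hmem
      have hs1 : s ∈ Icc (0:ℝ) 1 := ⟨hs.1, le_trans hs.2 ht.2⟩
      have hneg := h s hs1
      rw [hθs, Real.sin_int_mul_pi] at hneg; linarith
    · by_contra hle
      push_neg at hle
      have hmem : ((n:ℝ)+1)*π ∈ Icc (θ 0) (θ t) := ⟨le_of_lt hn2, hle⟩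
      obtain ⟨s, hs, hθs⟩ := intermediate_value_Icc ht.1 (hc.continuousOn) hmem
      have hs1 : s ∈ Icc (0:ℝ) 1 := ⟨hs.1, le_trans hs.2 ht.2⟩
      have hneg := h s hs1
      rw [hθs] at hneg; linarith
  have hodd : ∃ k : ℤ, n = 2*k+1 := by
    rcases Int.even_or_odd n with ⟨k, hk⟩ | ⟨k, hk⟩
    · exfalso
      have hsin0 : Real.sin (θ 0) = Real.sin (θ 0 - (n:ℝ)*π) * Real.cos ((n:ℝ)*π) := by
        have e : θ 0 = (θ 0 - (n:ℝ)*π) + (n:ℝ)*π := by ring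
        nth_rewrite 1 [e]
        rw [Real.sin_add, Real.sin_int_mul_pi]; ring
      have hpos : 0 < Real.sin (θ 0 - (n:ℝ)*π) :=
        Real.sin_pos_of_pos_of_lt_pi (by linarith) (by linarith)
      have hcos : Real.cos ((n:ℝ)*π) = 1 := by
        have hc2 := Real.cos_int_mul_two_pi k
        have e : ((n:ℝ))*π = (k:ℝ)*(2*π) := by
          have : (n:ℝ) = (k:ℝ) + (k:ℝ) := by exact_mod_cast congrArg (Int.cast : ℤ → ℝ) hk
          rw [this]; ring
        rw [e]; exact hc2
      have h00 := h 0 ⟨le_refl _, zero_le_one⟩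
      rw [hsin0, hcos, mul_one] at h00
      linarith
    · exact ⟨k, hk⟩
  obtain ⟨k, rfl⟩ := hodd
  have h0 := key 0 ⟨le_refl _, zero_le_one⟩
  have h1 := key 1 ⟨zero_le_one, le_refl _⟩
  push_cast at h0 h1
  rw [my_arccos_cos (θ 0) k (by linarith [h0.1]) (by linarith [h0.2]),
      my_arccos_cos (θ 1) k (by linarith [h1.1]) (by linarith [h1.2])]
  ring
open Real Set

lemma dot3_eq (u v : E3) : dot3 u v = u 0 * v 0 + u 1 * v 1 + u 2 * v 2 := by
  simp [dot3, PiLp.inner_apply, RCLike.inner_apply, Fin.sum_univ_three, mul_comm]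

lemma cross3_0 (u v : E3) : cross3 u v 0 = u 1 * v 2 - u 2 * v 1 := rfl
lemma cross3_1 (u v : E3) : cross3 u v 1 = u 2 * v 0 - u 0 * v 2 := rfl
lemma cross3_2 (u v : E3) : cross3 u v 2 = u 0 * v 1 - u 1 * v 0 := rfl

lemma E3_add (u v : E3) (i : Fin 3) : (u + v) i = u i + v i := rfl
lemma E3_sub (u v : E3) (i : Fin 3) : (u - v) i = u i - v i := rfl
lemma E3_smul (a : ℝ) (u : E3) (i : Fin 3) : (a • u) i = a * u i := rfl
lemma E3_neg (u : E3) (i : Fin 3) : (-u) i = -(u i) := rfl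

lemma dot3_comm (u v : E3) : dot3 u v = dot3 v u := by
  simp only [dot3_eq]; ring

lemma dot3_self (v : E3) : dot3 v v = ‖v‖ ^ 2 := real_inner_self_eq_norm_sq v

lemma norm_eq_one_of_dot (v : E3) (h : dot3 v v = 1) : ‖v‖ = 1 := by
  have h2 := dot3_self v
  nlinarith [norm_nonneg v]

-- generic bilinear expansion
lemma dot_combo (A B : E3) (f g a b : ℝ) :
    dot3 (f • A + g • B) (a • A + b • B)
      = f*a*dot3 A A + (f*b+g*a)*dot3 A B + g*b*dot3 B B := by
  simp only [dot3_eq, E3_add, E3_smul]; ring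

lemma dot_tproj (q x : E3) :
    dot3 (tproj q x) (tproj q x)
      = dot3 x x - 2*(dot3 q x)*(dot3 q x) + (dot3 q x)*(dot3 q x)*(dot3 q q) := by
  simp only [tproj, dot3_eq, E3_sub, E3_smul]; ring

lemma det_combo (A B : E3) (f g a b p q : ℝ) :
    dot3 (f • A + g • B) (cross3 (a • A + b • B) (p • A + q • B)) = 0 := by
  simp only [dot3_eq, E3_add, E3_smul, cross3_0, cross3_1, cross3_2]; ring

lemma det_tproj (A B x : E3) (f g a b : ℝ) :
    dot3 (f • A + g • B) (cross3 (tproj (f • A + g • B) x) (a • A + b • B))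
      = (f*b - g*a) * dot3 A (cross3 x B) := by
  simp only [tproj, dot3_eq, E3_sub, E3_add, E3_smul, cross3_0, cross3_1, cross3_2]; ring

lemma det_flip (A B x : E3) : dot3 A (cross3 x B) = - dot3 A (cross3 B x) := by
  simp only [dot3_eq, cross3_0, cross3_1, cross3_2]; ring


lemma key_unit (L t : ℝ) :
    Real.sin ((1-t)*L)^2 + Real.sin (t*L)^2
      + 2*Real.sin ((1-t)*L)*Real.sin (t*L)*Real.cos L = Real.sin L ^ 2 := by
  have hc := Real.cos_add ((1-t)*L) (t*L)
  have hs := Real.sin_add ((1-t)*L) (t*L)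
  rw [show (1-t)*L + t*L = L by ring] at hc hs
  rw [hc, hs]
  linear_combination (-(Real.sin ((1-t)*L)^2)) * Real.sin_sq_add_cos_sq (t*L)
    + (-(Real.sin (t*L)^2)) * Real.sin_sq_add_cos_sq ((1-t)*L)

lemma key_deriv (L t : ℝ) :
    Real.cos ((1-t)*L)^2 + Real.cos (t*L)^2
      - 2*Real.cos ((1-t)*L)*Real.cos (t*L)*Real.cos L = Real.sin L ^ 2 := by
  have hc := Real.cos_add ((1-t)*L) (t*L)
  have hs := Real.sin_add ((1-t)*L) (t*L)
  rw [show (1-t)*L + t*L = L by ring] at hc hs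
  rw [hc, hs]
  linear_combination (-(Real.cos ((1-t)*L)^2)) * Real.sin_sq_add_cos_sq (t*L)
    + (-(Real.cos (t*L)^2)) * Real.sin_sq_add_cos_sq ((1-t)*L)

lemma key_wrons (L t : ℝ) :
    Real.sin ((1-t)*L)*Real.cos (t*L) + Real.cos ((1-t)*L)*Real.sin (t*L) = Real.sin L := by
  have hs := Real.sin_add ((1-t)*L) (t*L)
  rw [show (1-t)*L + t*L = L by ring] at hs
  linarith

lemma trig_unit (L t : ℝ) (hsL : Real.sin L ≠ 0) :
    (Real.sin ((1-t)*L)/Real.sin L)^2 + (Real.sin (t*L)/Real.sin L)^2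
      + 2*(Real.sin ((1-t)*L)/Real.sin L)*(Real.sin (t*L)/Real.sin L)*Real.cos L = 1 := by
  field_simp
  linear_combination key_unit L t

lemma trig_deriv (L t : ℝ) (hsL : Real.sin L ≠ 0) :
    (Real.cos ((1-t)*L)*(-1*L)/Real.sin L)^2 + (Real.cos (t*L)*(1*L)/Real.sin L)^2
      + 2*(Real.cos ((1-t)*L)*(-1*L)/Real.sin L)*(Real.cos (t*L)*(1*L)/Real.sin L)*Real.cos L
      = L^2 := by
  field_simp
  linear_combination (L^2) * key_deriv L t

lemma trig_wrons (L t : ℝ) (hsL : Real.sin L ≠ 0) :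
    (Real.sin ((1-t)*L)/Real.sin L) * (Real.cos (t*L)*(1*L)/Real.sin L)
      - (Real.sin (t*L)/Real.sin L) * (Real.cos ((1-t)*L)*(-1*L)/Real.sin L)
      = L/Real.sin L := by
  field_simp
  linear_combination L * key_wrons L t
open Real Set

lemma slerp_hasDerivAt (A B : E3) (s : ℝ) :
    HasDerivAt (fun u => slerp A B u)
      ((Real.cos ((1-s)*Real.arccos (dot3 A B)) * (-1*Real.arccos (dot3 A B)) / Real.sin (Real.arccos (dot3 A B))) • A
       + (Real.cos (s*Real.arccos (dot3 A B)) * (1*Real.arccos (dot3 A B)) / Real.sin (Real.arccos (dot3 A B))) • B) s := by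
  unfold slerp
  have h1 : HasDerivAt (fun u : ℝ => (1-u)*Real.arccos (dot3 A B)) (-1*Real.arccos (dot3 A B)) s :=
    (((hasDerivAt_id s).const_sub 1).mul_const _)
  have h2 : HasDerivAt (fun u : ℝ => u*Real.arccos (dot3 A B)) (1*Real.arccos (dot3 A B)) s :=
    ((hasDerivAt_id s).mul_const _)
  exact ((h1.sin.div_const _).smul_const A).add ((h2.sin.div_const _).smul_const B)

lemma slerp_deriv (A B : E3) (s : ℝ) :
    deriv (fun u => slerp A B u) s
      = (Real.cos ((1-s)*Real.arccos (dot3 A B)) * (-1*Real.arccos (dot3 A B)) / Real.sin (Real.arccos (dot3 A B))) • A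
       + (Real.cos (s*Real.arccos (dot3 A B)) * (1*Real.arccos (dot3 A B)) / Real.sin (Real.arccos (dot3 A B))) • B :=
  (slerp_hasDerivAt A B s).deriv

lemma slerp_deriv2 (A B : E3) (s : ℝ) :
    deriv (deriv (fun u => slerp A B u)) s
      = (-Real.sin ((1-s)*Real.arccos (dot3 A B)) * (-1*Real.arccos (dot3 A B)) * (-1*Real.arccos (dot3 A B)) / Real.sin (Real.arccos (dot3 A B))) • A
       + (-Real.sin (s*Real.arccos (dot3 A B)) * (1*Real.arccos (dot3 A B)) * (1*Real.arccos (dot3 A B)) / Real.sin (Real.arccos (dot3 A B))) • B := by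
  have hfun : deriv (fun u => slerp A B u) = fun s =>
      (Real.cos ((1-s)*Real.arccos (dot3 A B)) * (-1*Real.arccos (dot3 A B)) / Real.sin (Real.arccos (dot3 A B))) • A
       + (Real.cos (s*Real.arccos (dot3 A B)) * (1*Real.arccos (dot3 A B)) / Real.sin (Real.arccos (dot3 A B))) • B :=
    funext fun s => slerp_deriv A B s
  rw [hfun]
  have h1 : HasDerivAt (fun u : ℝ => (1-u)*Real.arccos (dot3 A B)) (-1*Real.arccos (dot3 A B)) s :=
    (((hasDerivAt_id s).const_sub 1).mul_const _)
  have h2 : HasDerivAt (fun u : ℝ => u*Real.arccos (dot3 A B)) (1*Real.arccos (dot3 A B)) s :=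
    ((hasDerivAt_id s).mul_const _)
  have g1 : HasDerivAt (fun u : ℝ => Real.cos ((1-u)*Real.arccos (dot3 A B)) * (-1*Real.arccos (dot3 A B)) / Real.sin (Real.arccos (dot3 A B)))
      (-Real.sin ((1-s)*Real.arccos (dot3 A B)) * (-1*Real.arccos (dot3 A B)) * (-1*Real.arccos (dot3 A B)) / Real.sin (Real.arccos (dot3 A B))) s := by
    have := ((h1.cos.mul_const (-1*Real.arccos (dot3 A B))).div_const (Real.sin (Real.arccos (dot3 A B))))
    convert this using 1
  have g2 : HasDerivAt (fun u : ℝ => Real.cos (u*Real.arccos (dot3 A B)) * (1*Real.arccos (dot3 A B)) / Real.sin (Real.arccos (dot3 A B)))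
      (-Real.sin (s*Real.arccos (dot3 A B)) * (1*Real.arccos (dot3 A B)) * (1*Real.arccos (dot3 A B)) / Real.sin (Real.arccos (dot3 A B))) s := by
    have := ((h2.cos.mul_const (1*Real.arccos (dot3 A B))).div_const (Real.sin (Real.arccos (dot3 A B))))
    convert this using 1
  exact ((g1.smul_const A).add (g2.smul_const B)).deriv

lemma slerp_zero (A B : E3) (hsL : Real.sin (Real.arccos (dot3 A B)) ≠ 0) : slerp A B 0 = A := by
  unfold slerp
  norm_num
  rw [div_self hsL]
  simp

lemma slerp_one (A B : E3) (hsL : Real.sin (Real.arccos (dot3 A B)) ≠ 0) : slerp A B 1 = B := by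
  unfold slerp
  norm_num
  rw [div_self hsL]
  simp
open Real Set

lemma geod_zero (A B : E3) (s : ℝ) : geodCurv (fun u => slerp A B u) s = 0 := by
  unfold geodCurv
  rw [slerp_deriv, slerp_deriv2]
  show dot3 (slerp A B s) _ = _
  unfold slerp
  exact det_combo A B _ _ _ _ _ _

set_option maxHeartbeats 1000000 in
lemma edge_key (A B x₁ : E3) (hA : ‖A‖ = 1) (hB : ‖B‖ = 1) (hx : ‖x₁‖ = 1)
    (hne : A ≠ B) (hne' : A ≠ -B)
    (hav1 : -x₁ ∉ geoArc A B) (hav2 : x₁ ∉ geoArc A B)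
    (θ : ℝ → ℝ) (hθ : IsAngleFor (fun q => tproj q x₁) (fun s => slerp A B s) θ) :
    θ 1 - θ 0 =
      (if 0 < dot3 A (cross3 B x₁) then (1:ℝ) else -1) *
        (sphAngle A B x₁ + sphAngle B x₁ A - π) := by
  have hAA : dot3 A A = 1 := by rw [dot3_self, hA]; norm_num
  have hBB : dot3 B B = 1 := by rw [dot3_self, hB]; norm_num
  have hxx : dot3 x₁ x₁ = 1 := by rw [dot3_self, hx]; norm_num
  have hd2 : dot3 A B < 1 := by
    have h0 : A - B ≠ 0 := sub_ne_zero.2 hne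
    have h1 : 0 < ‖A - B‖ ^ 2 := pow_pos (norm_pos_iff.mpr h0) 2
    have h2 : ‖A - B‖^2 = ‖A‖^2 - 2 * dot3 A B + ‖B‖^2 := by
      simp only [dot3]; exact norm_sub_sq_real A B
    rw [hA, hB] at h2; nlinarith
  have hd1 : -1 < dot3 A B := by
    have h0 : A + B ≠ 0 := by
      intro h; exact hne' (by rw [eq_neg_iff_add_eq_zero]; exact h)
    have h1 : 0 < ‖A + B‖ ^ 2 := pow_pos (norm_pos_iff.mpr h0) 2
    have h2 : ‖A + B‖^2 = ‖A‖^2 + 2 * dot3 A B + ‖B‖^2 := by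
      simp only [dot3]; exact norm_add_sq_real A B
    rw [hA, hB] at h2; nlinarith
  have hL0 : 0 < Real.arccos (dot3 A B) := Real.arccos_pos.2 hd2
  have hLπ : Real.arccos (dot3 A B) < π := by
    rcases lt_or_eq_of_le (Real.arccos_le_pi (dot3 A B)) with h | h
    · exact h
    · exact absurd (Real.arccos_eq_pi.1 h) (by linarith)
  have hsL : 0 < Real.sin (Real.arccos (dot3 A B)) := Real.sin_pos_of_pos_of_lt_pi hL0 hLπ
  have hcL : Real.cos (Real.arccos (dot3 A B)) = dot3 A B :=
    Real.cos_arccos (by linarith) (by linarith)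
  -- unit norm along the arc
  have hunit : ∀ t : ℝ, dot3 (slerp A B t) (slerp A B t) = 1 := by
    intro t
    unfold slerp
    rw [dot_combo, hAA, hBB]
    have h := trig_unit (Real.arccos (dot3 A B)) t (ne_of_gt hsL)
    rw [hcL] at h
    linear_combination h
  have hnorm : ∀ t : ℝ, ‖slerp A B t‖ = 1 := fun t => norm_eq_one_of_dot _ (hunit t)
  -- membership in the geodesic arc
  have hgeoMem : ∀ t ∈ Icc (0:ℝ) 1, slerp A B t ∈ geoArc A B := by
    intro t ht
    have hw : (Real.sin ((1-t)*Real.arccos (dot3 A B))/Real.sin (Real.arccos (dot3 A B))) • A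
        + (Real.sin (t*Real.arccos (dot3 A B))/Real.sin (Real.arccos (dot3 A B))) • B = slerp A B t := rfl
    have hwne : slerp A B t ≠ 0 := by
      intro h0
      have := hnorm t
      rw [h0] at this; simp at this
    refine ⟨Real.sin ((1-t)*Real.arccos (dot3 A B))/Real.sin (Real.arccos (dot3 A B)),
           Real.sin (t*Real.arccos (dot3 A B))/Real.sin (Real.arccos (dot3 A B)), ?_, ?_, ?_, ?_⟩
    · apply div_nonneg _ (le_of_lt hsL)
      apply Real.sin_nonneg_of_nonneg_of_le_pi
      · nlinarith [ht.1, ht.2]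
      · nlinarith [ht.1, ht.2]
    · apply div_nonneg _ (le_of_lt hsL)
      apply Real.sin_nonneg_of_nonneg_of_le_pi
      · nlinarith [ht.1, ht.2]
      · nlinarith [ht.1, ht.2]
    · rw [hw]; exact hwne
    · rw [hw]; unfold nz; rw [hnorm t]; norm_num
  -- |dot with x₁| < 1 along the arc
  have hqlt : ∀ t ∈ Icc (0:ℝ) 1, (dot3 (slerp A B t) x₁)^2 < 1 := by
    intro t ht
    have hq1 : slerp A B t ≠ x₁ := fun h => hav2 (h ▸ hgeoMem t ht)
    have hq2 : slerp A B t ≠ -x₁ := fun h => hav1 (h ▸ hgeoMem t ht)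
    have hlt : dot3 (slerp A B t) x₁ < 1 := by
      have h0 : slerp A B t - x₁ ≠ 0 := sub_ne_zero.2 hq1
      have h1 : 0 < ‖slerp A B t - x₁‖^2 := pow_pos (norm_pos_iff.mpr h0) 2
      have h2 : ‖slerp A B t - x₁‖^2 = ‖slerp A B t‖^2 - 2*dot3 (slerp A B t) x₁ + ‖x₁‖^2 := by
        simp only [dot3]; exact norm_sub_sq_real _ _
      rw [hnorm t, hx] at h2; nlinarith
    have hgt : -1 < dot3 (slerp A B t) x₁ := by
      have h0 : slerp A B t + x₁ ≠ 0 := by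
        intro h; exact hq2 (by rw [eq_neg_iff_add_eq_zero]; exact h)
      have h1 : 0 < ‖slerp A B t + x₁‖^2 := pow_pos (norm_pos_iff.mpr h0) 2
      have h2 : ‖slerp A B t + x₁‖^2 = ‖slerp A B t‖^2 + 2*dot3 (slerp A B t) x₁ + ‖x₁‖^2 := by
        simp only [dot3]; exact norm_add_sq_real _ _
      rw [hnorm t, hx] at h2; nlinarith
    nlinarith
  have hXpos : ∀ t ∈ Icc (0:ℝ) 1, 0 < ‖tproj (slerp A B t) x₁‖ := by
    intro t ht
    have h2 : ‖tproj (slerp A B t) x₁‖^2 = 1 - (dot3 (slerp A B t) x₁)^2 := by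
      rw [← dot3_self, dot_tproj, hxx, hunit t]; ring
    nlinarith [norm_nonneg (tproj (slerp A B t) x₁), hqlt t ht]
  -- derivative norms
  have hDdot : ∀ t : ℝ, dot3 (deriv (fun u => slerp A B u) t) (deriv (fun u => slerp A B u) t)
      = (Real.arccos (dot3 A B))^2 := by
    intro t
    rw [slerp_deriv, dot_combo, hAA, hBB]
    have h := trig_deriv (Real.arccos (dot3 A B)) t (ne_of_gt hsL)
    rw [hcL] at h
    linear_combination h
  have hDnorm : ∀ t : ℝ, ‖deriv (fun u => slerp A B u) t‖ = Real.arccos (dot3 A B) := by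
    intro t
    have h := hDdot t
    rw [dot3_self] at h
    nlinarith [norm_nonneg (deriv (fun u => slerp A B u) t)]
  -- the sine equation
  have hsin : ∀ t ∈ Icc (0:ℝ) 1,
      ‖tproj (slerp A B t) x₁‖ * Real.arccos (dot3 A B) * Real.sin (θ t)
        = (Real.arccos (dot3 A B)/Real.sin (Real.arccos (dot3 A B))) * dot3 A (cross3 x₁ B) := by
    intro t ht
    have e2 := (hθ.2 t).2
    have hrhs : dot3 (slerp A B t) (cross3 (tproj (slerp A B t) x₁) (deriv (fun s => slerp A B s) t))
        = (Real.arccos (dot3 A B)/Real.sin (Real.arccos (dot3 A B))) * dot3 A (cross3 x₁ B) := by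
      rw [slerp_deriv]
      unfold slerp
      rw [det_tproj, trig_wrons _ t (ne_of_gt hsL)]
    calc ‖tproj (slerp A B t) x₁‖ * Real.arccos (dot3 A B) * Real.sin (θ t)
        = ‖tproj (slerp A B t) x₁‖ * ‖deriv (fun s => slerp A B s) t‖ * Real.sin (θ t) := by
          rw [hDnorm t]
      _ = dot3 (slerp A B t) (cross3 (tproj (slerp A B t) x₁) (deriv (fun s => slerp A B s) t)) := e2
      _ = _ := hrhs
  -- endpoints
  have hc0 : slerp A B 0 = A := slerp_zero A B (ne_of_gt hsL)
  have hc1 : slerp A B 1 = B := slerp_one A B (ne_of_gt hsL)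
  have hXA : 0 < ‖tproj A x₁‖ := by
    have h := hXpos 0 ⟨le_refl _, zero_le_one⟩; rwa [hc0] at h
  have hXB : 0 < ‖tproj B x₁‖ := by
    have h := hXpos 1 ⟨zero_le_one, le_refl _⟩; rwa [hc1] at h
  have htAB : 0 < ‖tproj A B‖ := by
    have h2 : ‖tproj A B‖^2 = 1 - (dot3 A B)^2 := by
      rw [← dot3_self, dot_tproj, hAA, hBB]; ring
    nlinarith [norm_nonneg (tproj A B)]
  have htBA : 0 < ‖tproj B A‖ := by
    have h2 : ‖tproj B A‖^2 = 1 - (dot3 B A)^2 := by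
      rw [← dot3_self, dot_tproj, hAA, hBB]; ring
    rw [dot3_comm B A] at h2
    nlinarith [norm_nonneg (tproj B A)]
  have hκ : 0 < Real.arccos (dot3 A B)/Real.sin (Real.arccos (dot3 A B)) := div_pos hL0 hsL
  have hder0 : deriv (fun s => slerp A B s) 0
      = (Real.arccos (dot3 A B)/Real.sin (Real.arccos (dot3 A B))) • tproj A B := by
    rw [slerp_deriv]
    unfold tproj
    ext i
    simp only [E3_add, E3_smul, E3_sub]
    rw [show (1-(0:ℝ)) * Real.arccos (dot3 A B) = Real.arccos (dot3 A B) by ring,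
        show (0:ℝ) * Real.arccos (dot3 A B) = 0 by ring, hcL, Real.cos_zero]
    ring
  have hder1 : deriv (fun s => slerp A B s) 1
      = (-(Real.arccos (dot3 A B)/Real.sin (Real.arccos (dot3 A B)))) • tproj B A := by
    rw [slerp_deriv]
    unfold tproj
    ext i
    simp only [E3_add, E3_smul, E3_sub]
    rw [show (1-(1:ℝ)) * Real.arccos (dot3 A B) = 0 by ring,
        show (1:ℝ) * Real.arccos (dot3 A B) = Real.arccos (dot3 A B) by ring, hcL, Real.cos_zero,
        dot3_comm B A]
    ring
  -- cosine at the endpoints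
  have hcosθ0 : Real.cos (θ 0) = dot3 (tproj A B) (tproj A x₁) / (‖tproj A B‖ * ‖tproj A x₁‖) := by
    have e1 := (hθ.2 0).1
    simp only [] at e1
    rw [hc0, hder0] at e1
    rw [norm_smul, Real.norm_eq_abs, abs_of_pos hκ] at e1
    rw [show dot3 (tproj A x₁) ((Real.arccos (dot3 A B)/Real.sin (Real.arccos (dot3 A B))) • tproj A B)
        = (Real.arccos (dot3 A B)/Real.sin (Real.arccos (dot3 A B))) * dot3 (tproj A x₁) (tproj A B)
        from real_inner_smul_right _ _ _] at e1
    have h' : (Real.arccos (dot3 A B)/Real.sin (Real.arccos (dot3 A B)))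
          * (‖tproj A x₁‖ * ‖tproj A B‖ * Real.cos (θ 0))
        = (Real.arccos (dot3 A B)/Real.sin (Real.arccos (dot3 A B)))
          * dot3 (tproj A x₁) (tproj A B) := by linear_combination e1
    have h'' := mul_left_cancel₀ (ne_of_gt hκ) h'
    rw [dot3_comm (tproj A B), eq_div_iff (ne_of_gt (by positivity))]
    linarith [h'']
  have hcosθ1 : Real.cos (θ 1) = -(dot3 (tproj B x₁) (tproj B A) / (‖tproj B x₁‖ * ‖tproj B A‖)) := by
    have e1 := (hθ.2 1).1
    simp only [] at e1
    rw [hc1, hder1] at e1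
    rw [norm_smul, Real.norm_eq_abs, abs_neg, abs_of_pos hκ] at e1
    rw [show dot3 (tproj B x₁) ((-(Real.arccos (dot3 A B)/Real.sin (Real.arccos (dot3 A B)))) • tproj B A)
        = (-(Real.arccos (dot3 A B)/Real.sin (Real.arccos (dot3 A B)))) * dot3 (tproj B x₁) (tproj B A)
        from real_inner_smul_right _ _ _] at e1
    have h' : (Real.arccos (dot3 A B)/Real.sin (Real.arccos (dot3 A B)))
          * (‖tproj B x₁‖ * ‖tproj B A‖ * Real.cos (θ 1))
        = (Real.arccos (dot3 A B)/Real.sin (Real.arccos (dot3 A B)))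
          * (-(dot3 (tproj B x₁) (tproj B A))) := by linear_combination e1
    have h'' := mul_left_cancel₀ (ne_of_gt hκ) h'
    have hpos : (0:ℝ) < ‖tproj B x₁‖ * ‖tproj B A‖ := mul_pos hXB htBA
    rw [← neg_div, eq_div_iff (ne_of_gt hpos)]
    linear_combination h''
  have hβval : sphAngle A B x₁ = Real.arccos (Real.cos (θ 0)) := by
    unfold sphAngle; rw [hcosθ0]
  have hγval : sphAngle B x₁ A = π - Real.arccos (Real.cos (θ 1)) := by
    unfold sphAngle
    rw [show dot3 (tproj B x₁) (tproj B A) / (‖tproj B x₁‖ * ‖tproj B A‖) = -Real.cos (θ 1) by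
      rw [hcosθ1]; ring]
    exact Real.arccos_neg _
  have hflip : dot3 A (cross3 x₁ B) = - dot3 A (cross3 B x₁) := det_flip A B x₁
  rcases lt_trichotomy (dot3 A (cross3 B x₁)) 0 with hneg | hzero | hpos
  · rw [if_neg (by linarith)]
    have hsinpos : ∀ t ∈ Icc (0:ℝ) 1, Real.sin (-(θ t)) < 0 := by
      intro t ht
      have h := hsin t ht
      rw [hflip] at h
      have hK : 0 < ‖tproj (slerp A B t) x₁‖ * Real.arccos (dot3 A B) :=
        mul_pos (hXpos t ht) hL0
      have hR : 0 < (Real.arccos (dot3 A B)/Real.sin (Real.arccos (dot3 A B)))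
          * (-(dot3 A (cross3 B x₁))) := mul_pos hκ (by linarith)
      rw [Real.sin_neg]
      nlinarith [h, hK, hR]
    have hb := branch_neg (fun t => -(θ t)) (hθ.1.neg) hsinpos
    simp only [Real.cos_neg] at hb
    rw [hβval, hγval]
    linarith [hb]
  · rw [if_neg (by rw [hzero]; exact lt_irrefl 0)]
    have hz : ∀ t ∈ Icc (0:ℝ) 1, Real.sin (θ t) = 0 := by
      intro t ht
      have h := hsin t ht
      rw [hflip, hzero] at h
      have hK : ‖tproj (slerp A B t) x₁‖ * Real.arccos (dot3 A B) ≠ 0 :=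
        ne_of_gt (mul_pos (hXpos t ht) hL0)
      have h0 : ‖tproj (slerp A B t) x₁‖ * Real.arccos (dot3 A B) * Real.sin (θ t) = 0 := by
        rw [h]; ring
      rcases mul_eq_zero.1 h0 with h1 | h1
      · exact absurd h1 hK
      · exact h1
    have hconst := theta_const θ hθ.1 hz
    rw [hβval, hγval, hconst]
    ring
  · rw [if_pos hpos]
    have hsinneg : ∀ t ∈ Icc (0:ℝ) 1, Real.sin (θ t) < 0 := by
      intro t ht
      have h := hsin t ht
      rw [hflip] at h
      have hK : 0 < ‖tproj (slerp A B t) x₁‖ * Real.arccos (dot3 A B) :=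
        mul_pos (hXpos t ht) hL0
      have hR : (Real.arccos (dot3 A B)/Real.sin (Real.arccos (dot3 A B)))
          * (-(dot3 A (cross3 B x₁))) < 0 := by
        apply mul_neg_of_pos_of_neg hκ; linarith
      nlinarith [h, hK, hR]
    have hb := branch_neg θ hθ.1 hsinneg
    rw [hβval, hγval]
    linarith [hb]
end
/-- for a closed spherical polygon `Γ` decomposed into geodesic
triangles with common apex `x₁`, with `X` the "gradient of height" field with source
`x₀ = -x₁` and sink `x₁`,
`2π·ind(Γ, X) − ∫_Γ k_g ds − Σᵢ θᵢ = Σᵢ δᵢ(βᵢ + γᵢ − π)`; the geodesic curvature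
vanishes along the geodesic edges. -/
theorem stmt19 (N : ℕ) [NeZero N] (hN : 3 ≤ N)
    (V : Fin N → E3) (hV : ∀ i, ‖V i‖ = 1) (x₁ : E3) (hx : ‖x₁‖ = 1)
    (hVn : ∀ i, V i ≠ V (i + 1) ∧ V i ≠ -V (i + 1))
    (havoid : ∀ i, (-x₁) ∉ geoArc (V i) (V (i + 1)) ∧ x₁ ∉ geoArc (V i) (V (i + 1)))
    -- base angles and orientations of the geodesic triangles with apex `x₁`:
    (β γ : Fin N → ℝ) (δ : Fin N → ℝ)
    (hβ : ∀ i, β i = sphAngle (V i) (V (i + 1)) x₁)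
    (hγ : ∀ i, γ i = sphAngle (V (i + 1)) x₁ (V i))
    (hδ : ∀ i, δ i = if 0 < dot3 (V i) (cross3 (V (i + 1)) x₁) then 1 else -1)
    -- angle functions of the edge tangents relative to the gradient-of-height field
    -- `X q = x₁ − (q·x₁) q`, whose flowlines are the meridians from `x₀` to `x₁`:
    (θe : Fin N → ℝ → ℝ)
    (hθe : ∀ i : Fin N, IsAngleFor (fun q => tproj q x₁)
      (fun s => slerp (V i) (V (i + 1)) s) (θe i))
    -- exterior turning angles at the corners:
    (φ : Fin N → ℝ) (hφr : ∀ i, φ i ∈ Ioo (-π) π)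
    (hφ : ∀ i : Fin N,
      ‖deriv (fun s => slerp (V i) (V (i + 1)) s) 1‖ *
        ‖deriv (fun s => slerp (V (i + 1)) (V (i + 1 + 1)) s) 0‖ * Real.cos (φ i) =
        dot3 (deriv (fun s => slerp (V i) (V (i + 1)) s) 1)
          (deriv (fun s => slerp (V (i + 1)) (V (i + 1 + 1)) s) 0) ∧
      ‖deriv (fun s => slerp (V i) (V (i + 1)) s) 1‖ *
        ‖deriv (fun s => slerp (V (i + 1)) (V (i + 1 + 1)) s) 0‖ * Real.sin (φ i) =
        dot3 (V (i + 1))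
          (cross3 (deriv (fun s => slerp (V i) (V (i + 1)) s) 1)
            (deriv (fun s => slerp (V (i + 1)) (V (i + 1 + 1)) s) 0))) :
    -- geodesic curvature vanishes along the geodesic edges, and the claimed identity
    -- holds with `ind(Γ, X) = (1/2π)(Σᵢ Δθᵢ + Σᵢ φᵢ)` and `∫_Γ k_g ds = 0`:
    (∀ i : Fin N, ∀ s ∈ Ioo (0 : ℝ) 1,
      geodCurv (fun u => slerp (V i) (V (i + 1)) u) s = 0) ∧
    2 * π * ((1 / (2 * π)) * ((∑ i : Fin N, (θe i 1 - θe i 0)) + ∑ i : Fin N, φ i))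
        - 0 - (∑ i : Fin N, φ i)
      = ∑ i : Fin N, δ i * (β i + γ i - π) := by
  constructor
  · intro i s _
    exact geod_zero (V i) (V (i+1)) s
  · have hsum : ∀ i : Fin N, θe i 1 - θe i 0 = δ i * (β i + γ i - π) := by
      intro i
      rw [hβ i, hγ i, hδ i]
      exact edge_key (V i) (V (i+1)) x₁ (hV i) (hV (i+1)) hx (hVn i).1 (hVn i).2
        (havoid i).1 (havoid i).2 (θe i) (hθe i)
    have hS : (∑ i : Fin N, (θe i 1 - θe i 0)) = ∑ i : Fin N, δ i * (β i + γ i - π) :=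
      Finset.sum_congr rfl (fun i _ => hsum i)
    rw [← hS]
    have hπ : (2:ℝ) * π ≠ 0 := by positivity
    have h2 : 2 * π * ((1 / (2 * π)) * ((∑ i : Fin N, (θe i 1 - θe i 0)) + ∑ i : Fin N, φ i))
        = (∑ i : Fin N, (θe i 1 - θe i 0)) + ∑ i : Fin N, φ i := by
      field_simp
    linarith [h2]
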